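/- No 1-random set is uniformly introenumerable. -/

import Mathlib

open MeasureTheory

/-- A set (of any primcodable type) is computably enumerable. -/
def CE {α : Type*} [Primcodable α] (S : Set α) : Prop :=
  ∃ f : α →. ℕ, Partrec f ∧ S = f.Dom

/-- The `y`-th finite set in a canonical listing of all finite subsets of `ℕ`. -/
def Dfin (y : ℕ) : Set ℕ := ↑(Denumerable.ofNat (Finset ℕ) y)

/-- Application of the enumeration operator with c.e. index set `W` to an oracle `X`. -/
def enumOp (W : Set ℕ) (X : Set ℕ) : Set ℕ :=
  {x | ∃ y, Nat.pair x y ∈ W ∧ Dfin y ⊆ X}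

/-- Enumeration reducibility. -/
def EnumRed (A B : Set ℕ) : Prop := ∃ W : Set ℕ, CE W ∧ A = enumOp W B

/-- Enumeration equivalence. -/
def EnumEquiv (A B : Set ℕ) : Prop := EnumRed A B ∧ EnumRed B A

/-- Application of a hyper-enumeration operator with c.e. index set `W` to an oracle `X`. -/
def henumOp (W : Set ℕ) (X : Set ℕ) : Set ℕ :=
  {x | ∀ f : List ℕ, ∃ n y,
    Nat.pair (Encodable.encode (f.take n)) (Nat.pair x y) ∈ W ∧ Dfin y ⊆ X}

/-- Hyper-enumeration reducibility. -/
def HypEnumRed (B A : Set ℕ) : Prop := ∃ W : Set ℕ, CE W ∧ B = henumOp W A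

def Cototal (A : Set ℕ) : Prop := EnumRed A Aᶜ

def HypCototal (A : Set ℕ) : Prop := HypEnumRed A Aᶜ

def UnifIntroenum (X : Set ℕ) : Prop :=
  X.Infinite ∧ ∃ W : Set ℕ, CE W ∧ ∀ Y ⊆ X, Y.Infinite → enumOp W Y = X

def Introenum (X : Set ℕ) : Prop :=
  X.Infinite ∧ ∀ Y ⊆ X, Y.Infinite → ∃ W : Set ℕ, CE W ∧ enumOp W Y = X

/-- View a point of Cantor space as a subset of `ℕ`. -/
def toSet (A : ℕ → Bool) : Set ℕ := {n | A n = true}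

/-- Remove `n` from (the set coded by) `A`. -/
def drop (A : ℕ → Bool) (n : ℕ) : ℕ → Bool := fun m => if m = n then false else A m

/-- `A` is `Ψ`-autoreducible. -/
def AutoRed (Ψ : ℕ → (ℕ → Bool) → Bool) (A : ℕ → Bool) : Prop :=
  ∀ n, A n = Ψ n (drop A n)

/-- The basic clopen cylinder of a finite binary string. -/
def cyl (σ : List Bool) : Set (ℕ → Bool) := {A | ∀ i : Fin σ.length, A i = σ.get i}

/-- `μ` is the uniform (fair-coin) measure on Cantor space: it gives each cylinder
of a string of length `k` measure `2⁻ᵏ`.  (This characterizes the measure uniquely.) -/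
def IsCoinMeasure (μ : Measure (ℕ → Bool)) : Prop :=
  ∀ σ : List Bool, μ (cyl σ) = 2⁻¹ ^ σ.length

/-- The first `k` bits of `A`. -/
def res (A : ℕ → Bool) (k : ℕ) : List Bool := List.ofFn fun i : Fin k => A i

/-- A `Π⁰₂` class in Cantor space. -/
def IsPi02 (C : Set (ℕ → Bool)) : Prop :=
  ∃ R : ℕ → List Bool → Bool, Computable (fun p : ℕ × List Bool => R p.1 p.2) ∧
    C = {A | ∀ m, ∃ k, R m (res A k) = true}

/-- A `Π⁰₃` class in Cantor space. -/
def IsPi03 (C : Set (ℕ → Bool)) : Prop :=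
  ∃ R : ℕ → ℕ → List Bool → Bool,
    Computable (fun p : ℕ × ℕ × List Bool => R p.1 p.2.1 p.2.2) ∧
    C = {A | ∀ m, ∃ k, ∀ j, R m k (res A j) = true}

/-- The `m`-th level of the open test determined by the c.e. set `W` of pairs. -/
def testSet (W : Set (ℕ × List Bool)) (m : ℕ) : Set (ℕ → Bool) :=
  ⋃ σ ∈ {σ | (m, σ) ∈ W}, cyl σ

/-- Martin-Löf randomness (with respect to a measure `μ` on Cantor space). -/
def MLRandom (μ : Measure (ℕ → Bool)) (A : ℕ → Bool) : Prop :=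
  ∀ W : Set (ℕ × List Bool), CE W →
    (∀ m, μ (testSet W m) ≤ 2⁻¹ ^ m) → ∃ m, A ∉ testSet W m

/-- 2-randomness: passing all uniformly `Σ⁰₂` tests. -/
def TwoRandom (μ : Measure (ℕ → Bool)) (A : ℕ → Bool) : Prop :=
  ∀ R : ℕ → ℕ → List Bool → Bool,
    Computable (fun p : ℕ × ℕ × List Bool => R p.1 p.2.1 p.2.2) →
    (∀ m, μ {A | ∃ k, ∀ j, R m k (res A j) = true} ≤ 2⁻¹ ^ m) →
    ∃ m, A ∉ {A | ∃ k, ∀ j, R m k (res A j) = true}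

/-- Weak 2-randomness: avoiding every null `Π⁰₂` class. -/
def Weak2Random (μ : Measure (ℕ → Bool)) (A : ℕ → Bool) : Prop :=
  ∀ C : Set (ℕ → Bool), IsPi02 C → μ C = 0 → A ∉ C

/-- Weak 3-randomness: avoiding every null `Π⁰₃` class. -/
def Weak3Random (μ : Measure (ℕ → Bool)) (A : ℕ → Bool) : Prop :=
  ∀ C : Set (ℕ → Bool), IsPi03 C → μ C = 0 → A ∉ C

/-!
A uniform enumeration operator `Γ` for `A` recovers `A ↾ m` from the oracle `A ∩ [m, ∞)`, hence
from a finite piece `τ` of `A` beyond `m`: the string `A ↾ (m + |τ|)` is determined by `τ`, and `m`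
bits are saved. To turn this into a Martin-Löf test, call `τ` a record tail if at stage `|τ|` the
operator has enumerated strictly more numbers below `m` than at every earlier stage. Record tails
with the same count `c ≤ m` are pairwise incomparable, so by Kraft's inequality the strings
`Γ(τ) ++ τ` over record tails `τ` have total measure at most `(m + 1) 2⁻ᵐ` (the count plays the
role of the number of ones of `A ↾ m` in the description). With `m = 2k + 1` this is the `k`-th
level of a test, and `A` lies in every level: the first stage at which `Γ` has enumerated all of
`A ↾ m` is a record tail of `A` beyond `m`.
-/

open Denumerable
open Nat.Partrec (Code)
open scoped ENNReal

lemma List.countP_lt_countP_of_imp {α : Type*} {l : List α} {p q : α → Bool}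
    (hpq : ∀ x ∈ l, p x → q x) {a : α} (ha : a ∈ l) (hqa : q a) (hpa : ¬ p a) :
    l.countP p < l.countP q := by
  induction l with
  | nil => cases ha
  | cons b l ih =>
    have htail : ∀ x ∈ l, p x → q x := fun x hx => hpq x (List.mem_cons_of_mem _ hx)
    have hmono := List.countP_mono_left htail
    have hb := hpq b List.mem_cons_self
    simp only [List.countP_cons]
    rcases List.mem_cons.1 ha with rfl | ha
    · simpa [hqa, hpa] using hmono
    · have := ih htail ha
      by_cases hpb : p b
      · simp [hpb, hb hpb]; omega
      · by_cases hqb : q b <;> simp [hpb, hqb] <;> omega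

lemma Monotone.exists_record_stage {P : ℕ → ℕ → Prop} [∀ n, DecidablePred (P n)]
    (hP : Monotone P) (m : ℕ) : ∃ n, (∀ x < m, (∃ k, P k x) → P n x) ∧
      ∀ t < n, (List.range m).countP (fun x => decide (P t x)) <
        (List.range m).countP (fun x => decide (P n x)) := by
  classical
  have hex : ∃ n, ∀ x < m, (∃ k, P k x) → P n x := by
    have : ∀ᶠ n in Filter.atTop, ∀ x ∈ Finset.range m, (∃ k, P k x) → P n x := by
      refine Filter.eventually_all_finset _ |>.2 fun x _ => ?_
      by_cases hx : ∃ k, P k x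
      · obtain ⟨k, hk⟩ := hx
        exact Filter.eventually_atTop.2 ⟨k, fun n hn _ => hP hn x hk⟩
      · exact Filter.Eventually.of_forall fun n h => absurd h hx
    simpa using this.exists
  refine ⟨Nat.find hex, Nat.find_spec hex, fun t ht => ?_⟩
  obtain ⟨x, hx, hxk, hxt⟩ : ∃ x < m, (∃ k, P k x) ∧ ¬ P t x := by
    simpa using Nat.find_min hex ht
  exact List.countP_lt_countP_of_imp
    (fun y _ hy => decide_eq_true (hP ht.le y (of_decide_eq_true hy)))
    (List.mem_range.2 hx) (decide_eq_true (Nat.find_spec hex x hx hxk)) (by simpa using hxt)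

lemma ce_setOf_of_primrecPred {α : Type*} [Primcodable α] {p : α → Prop} (hp : PrimrecPred p) :
    CE {a | p a} := by
  obtain ⟨_, hp⟩ := hp
  have hre : REPred p := ComputablePred.to_re ⟨_, hp.to_comp⟩
  refine ⟨fun a => (Part.assert (p a) fun _ => Part.some ()).map fun _ => 0,
    hre.map ((Computable.const 0).comp Computable.snd).to₂, ?_⟩
  ext a
  simp [PFun.Dom, Part.dom_iff_mem]

lemma succ_mul_inv_two_pow_le (k : ℕ) :
    ((2 * k + 1 : ℕ) + 1 : ℝ≥0∞) * 2⁻¹ ^ (2 * k + 1) ≤ 2⁻¹ ^ k := by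
  have hk : (k : ℝ≥0∞) + 1 ≤ 2 ^ k := by exact_mod_cast Nat.lt_two_pow_self
  calc ((2 * k + 1 : ℕ) + 1 : ℝ≥0∞) * 2⁻¹ ^ (2 * k + 1)
      = ((k + 1) * 2⁻¹ ^ k) * (2 * 2⁻¹) * 2⁻¹ ^ k := by push_cast; ring
    _ ≤ (2 ^ k * 2⁻¹ ^ k) * (2 * 2⁻¹) * 2⁻¹ ^ k := by gcongr
    _ = 2⁻¹ ^ k := by
      rw [← mul_pow, ENNReal.mul_inv_cancel two_ne_zero ENNReal.ofNat_ne_top]; simp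

lemma res_length (A : ℕ → Bool) (n : ℕ) : (res A n).length = n := List.length_ofFn

lemma getD_res (A : ℕ → Bool) (n i : ℕ) : (res A n).getD i false = (decide (i < n) && A i) := by
  by_cases h : i < n <;> simp [res, List.getD_eq_getElem?_getD, h]

lemma getElem_res (A : ℕ → Bool) {n i : ℕ} (h : i < (res A n).length) : (res A n)[i] = A i :=
  List.getElem_ofFn ..

lemma res_add (A : ℕ → Bool) (m n : ℕ) :
    res A (m + n) = res A m ++ res (fun i => A (m + i)) n := by
  simp [res, List.ofFn_add]

lemma take_res (A : ℕ → Bool) {t n : ℕ} (h : t ≤ n) : (res A n).take t = res A t := by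
  apply List.ext_getElem <;> simp [res, h]

lemma res_prefix_res (A : ℕ → Bool) {a b : ℕ} (h : a ≤ b) : res A a <+: res A b := by
  rw [List.prefix_iff_eq_take, res_length, take_res A h]

lemma mem_cyl_iff {A : ℕ → Bool} {σ : List Bool} : A ∈ cyl σ ↔ res A σ.length = σ := by
  simp only [cyl, res, List.ext_getElem_iff, List.length_ofFn, List.getElem_ofFn, true_and]
  exact ⟨fun h i hi _ => by simpa using h ⟨i, hi⟩, fun h i => by simpa using h i i.2 (by simp)⟩

lemma mem_cyl_res (A : ℕ → Bool) (n : ℕ) : A ∈ cyl (res A n) :=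
  mem_cyl_iff.2 (by rw [res_length])

lemma disjoint_cyl {σ τ : List Bool} (h₁ : ¬ σ <+: τ) (h₂ : ¬ τ <+: σ) :
    Disjoint (cyl σ) (cyl τ) := by
  refine Set.disjoint_left.2 fun A hσ hτ => ?_
  rw [mem_cyl_iff] at hσ hτ
  rcases le_total σ.length τ.length with h | h
  · exact h₁ (hσ ▸ hτ ▸ res_prefix_res A h)
  · exact h₂ (hσ ▸ hτ ▸ res_prefix_res A h)

lemma measurableSet_cyl (σ : List Bool) : MeasurableSet (cyl σ) := by
  have : cyl σ = ⋂ i : Fin σ.length, (fun A : ℕ → Bool => A i) ⁻¹' {σ.get i} := by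
    ext A; simp [cyl]
  rw [this]
  exact .iInter fun i => measurable_pi_apply (i : ℕ) (measurableSet_singleton _)

lemma IsCoinMeasure.measure_univ {μ : Measure (ℕ → Bool)} (hμ : IsCoinMeasure μ) :
    μ Set.univ = 1 := by
  simpa [cyl] using hμ []

lemma raise'_eq_map_add : ∀ (l : List ℕ) (n : ℕ), raise' l n = (raise' l 0).map (· + n)
  | [], _ => rfl
  | m :: l, n => by
    rw [raise', raise', raise'_eq_map_add l, raise'_eq_map_add l (m + 0 + 1)]
    simp only [List.map_cons, List.map_map]
    congr 2
    ext; simp only [Function.comp_apply]; omega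

lemma raise'_zero_eq_foldr (l : List ℕ) :
    raise' l 0 = l.foldr (fun m r => m :: r.map (· + (m + 1))) [] := by
  induction l with
  | nil => rfl
  | cons m l ih => rw [raise', raise'_eq_map_add, ih]; rfl

def dfinList (y : ℕ) : List ℕ := raise' (ofNat (List ℕ) y) 0

lemma mem_dfinList {z y : ℕ} : z ∈ dfinList y ↔ z ∈ Dfin y := by
  show z ∈ raise' _ 0 ↔ z ∈ Finset.map _ (raise'Finset _ 0)
  simp [raise'Finset, Denumerable.eqv, Finset.mem_def]

lemma primrec_dfinList : Primrec dfinList := by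
  have step : Primrec₂ fun (_ : ℕ) (p : ℕ × List ℕ) => p.1 :: p.2.map (· + (p.1 + 1)) :=
    (Primrec.list_cons.comp (Primrec.fst.comp Primrec.snd)
      (Primrec.list_map (Primrec.snd.comp Primrec.snd)
        (Primrec.nat_add.comp Primrec.snd
          (Primrec.succ.comp (Primrec.fst.comp (Primrec.snd.comp Primrec.fst)))).to₂)).to₂
  exact (Primrec.list_foldr (Primrec.ofNat (List ℕ)) (Primrec.const []) step).of_eq
    fun y => (raise'_zero_eq_foldr _).symm

namespace Nat.Partrec.Code

/-- Stage `|τ|` of the enumeration operator `dom (eval cf)` run on the oracle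
`{m + i | τ[i] = true}`. -/
def Enumerates (cf : Code) (m : ℕ) (τ : List Bool) (x : ℕ) : Prop :=
  ∃ y < τ.length + 1, (evaln τ.length cf (Nat.pair x y)).isSome ∧
    ∀ z ∈ dfinList y, m ≤ z ∧ τ.getD (z - m) false = true

instance (cf : Code) (m : ℕ) (τ : List Bool) : DecidablePred (cf.Enumerates m τ) :=
  fun _ => inferInstanceAs (Decidable (∃ y < _, _))

variable {cf : Code} {m : ℕ}

lemma Enumerates.mono {τ τ' : List Bool} {x : ℕ} (hττ' : τ <+: τ')
    (h : cf.Enumerates m τ x) : cf.Enumerates m τ' x := by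
  obtain ⟨y, hy, hrun, hsub⟩ := h
  have hlen := hττ'.length_le
  obtain ⟨r, rfl⟩ := hττ'
  refine ⟨y, by omega, ?_, fun z hz => ?_⟩
  · obtain ⟨v, hv⟩ := Option.isSome_iff_exists.1 hrun
    exact Option.isSome_iff_exists.2 ⟨v, evaln_mono hlen hv⟩
  · obtain ⟨hmz, hbit⟩ := hsub z hz
    refine ⟨hmz, ?_⟩
    have hlt : z - m < τ.length := by
      by_contra hge
      simp [List.getD_eq_getElem?_getD, List.getElem?_eq_none (not_lt.1 hge)] at hbit
    rwa [List.getD_append _ _ _ _ hlt]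

lemma exists_enumerates_res_iff (B : ℕ → Bool) (x : ℕ) :
    (∃ n, cf.Enumerates m (res B n) x) ↔
      x ∈ enumOp (eval cf).Dom {z | m ≤ z ∧ B (z - m) = true} := by
  constructor
  · rintro ⟨n, y, -, hrun, hsub⟩
    obtain ⟨v, hv⟩ := Option.isSome_iff_exists.1 hrun
    refine ⟨y, (PFun.mem_dom _ _).2 ⟨v, evaln_sound hv⟩, fun z hz => ?_⟩
    obtain ⟨hmz, hbit⟩ := hsub z (mem_dfinList.2 hz)
    rw [getD_res, Bool.and_eq_true] at hbit
    exact ⟨hmz, hbit.2⟩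
  · rintro ⟨y, hy, hsub⟩
    obtain ⟨v, hv⟩ := (PFun.mem_dom _ _).1 hy
    obtain ⟨s, hs⟩ := evaln_complete.1 hv
    refine ⟨s + y + (dfinList y).sum + 1, y, by simp [res_length]; omega, ?_, fun z hz => ?_⟩
    · exact Option.isSome_iff_exists.2 ⟨v, evaln_mono (by simp [res_length]; omega) hs⟩
    · obtain ⟨hmz, hbit⟩ := hsub (mem_dfinList.1 hz)
      have := List.le_sum_of_mem hz
      refine ⟨hmz, ?_⟩
      rw [getD_res, hbit, Bool.and_true, decide_eq_true_iff]
      omega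

def enumCount (cf : Code) (m : ℕ) (τ : List Bool) : ℕ :=
  (List.range m).countP fun x => decide (cf.Enumerates m τ x)

lemma enumCount_le (τ : List Bool) : cf.enumCount m τ ≤ m :=
  (List.countP_le_length).trans (List.length_range).le

def IsRecordTail (cf : Code) (m : ℕ) (τ : List Bool) : Prop :=
  ∀ t < τ.length, cf.enumCount m (τ.take t) < cf.enumCount m τ

def recoveredPrefix (cf : Code) (m : ℕ) (τ : List Bool) : List Bool :=
  (List.range m).map fun x => decide (cf.Enumerates m τ x)

def IsRecoveryString (cf : Code) (m : ℕ) (σ : List Bool) : Prop :=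
  σ.take m = cf.recoveredPrefix m (σ.drop m) ∧ cf.IsRecordTail m (σ.drop m)

lemma eq_of_prefix_of_isRecordTail {τ τ' : List Bool} (hτ' : cf.IsRecordTail m τ')
    (hc : cf.enumCount m τ = cf.enumCount m τ') (hττ' : τ <+: τ') : τ = τ' := by
  by_contra hne
  have hlt : τ.length < τ'.length :=
    lt_of_le_of_ne hττ'.length_le fun h => hne (hττ'.eq_of_length h)
  have := hτ' τ.length hlt
  rw [← List.prefix_iff_eq_take.1 hττ'] at this
  omega

lemma pairwiseDisjoint_cyl_isRecordTail (c : ℕ) :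
    {τ | cf.IsRecordTail m τ ∧ cf.enumCount m τ = c}.PairwiseDisjoint cyl := by
  intro τ hτ τ' hτ' hne
  exact disjoint_cyl
    (fun h => hne (eq_of_prefix_of_isRecordTail hτ'.1 (hτ.2.trans hτ'.2.symm) h))
    (fun h => hne (eq_of_prefix_of_isRecordTail hτ.1 (hτ'.2.trans hτ.2.symm) h).symm)

lemma length_recoveredPrefix (τ : List Bool) : (cf.recoveredPrefix m τ).length = m := by
  simp [recoveredPrefix]

lemma IsRecoveryString.eq_append {σ : List Bool} (h : cf.IsRecoveryString m σ) :
    σ = cf.recoveredPrefix m (σ.drop m) ++ σ.drop m := by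
  rw [← h.1, List.take_append_drop]

variable {μ : Measure (ℕ → Bool)}

lemma measure_biUnion_isRecordTail_le (hμ : IsCoinMeasure μ) (c : ℕ) :
    μ (⋃ τ ∈ {τ | cf.IsRecordTail m τ ∧ cf.enumCount m τ = c},
      cyl (cf.recoveredPrefix m τ ++ τ)) ≤ 2⁻¹ ^ m := by
  set R := {τ | cf.IsRecordTail m τ ∧ cf.enumCount m τ = c}
  calc μ (⋃ τ ∈ R, cyl (cf.recoveredPrefix m τ ++ τ))
      ≤ ∑' τ : R, μ (cyl (cf.recoveredPrefix m τ ++ τ)) := measure_biUnion_le μ R.to_countable _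
    _ = ∑' τ : R, 2⁻¹ ^ m * μ (cyl τ) := by
      congr 1; ext τ
      rw [hμ, hμ, List.length_append, length_recoveredPrefix, pow_add]
    _ = 2⁻¹ ^ m * μ (⋃ τ ∈ R, cyl τ) := by
      rw [ENNReal.tsum_mul_left, measure_biUnion R.to_countable
        (pairwiseDisjoint_cyl_isRecordTail c) fun τ _ => measurableSet_cyl τ]
    _ ≤ 2⁻¹ ^ m := by
      refine mul_le_of_le_one_right' ?_
      exact (measure_mono (Set.subset_univ _)).trans hμ.measure_univ.le

lemma measure_biUnion_isRecoveryString_le (hμ : IsCoinMeasure μ) (m : ℕ) :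
    μ (⋃ σ ∈ {σ | cf.IsRecoveryString m σ}, cyl σ) ≤ (m + 1) * 2⁻¹ ^ m := by
  have hcover : (⋃ σ ∈ {σ | cf.IsRecoveryString m σ}, cyl σ) ⊆
      ⋃ c ∈ Finset.range (m + 1), ⋃ τ ∈ {τ | cf.IsRecordTail m τ ∧ cf.enumCount m τ = c},
        cyl (cf.recoveredPrefix m τ ++ τ) := by
    simp only [Set.subset_def, Set.mem_iUnion]
    rintro A ⟨σ, hσ, hA⟩
    exact ⟨_, Finset.mem_range.2 (Nat.lt_succ_of_le (enumCount_le (σ.drop m))),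
      σ.drop m, ⟨hσ.2, rfl⟩, hσ.eq_append ▸ hA⟩
  calc μ (⋃ σ ∈ {σ | cf.IsRecoveryString m σ}, cyl σ)
      ≤ ∑ c ∈ Finset.range (m + 1), μ (⋃ τ ∈ {τ | cf.IsRecordTail m τ ∧ cf.enumCount m τ = c},
          cyl (cf.recoveredPrefix m τ ++ τ)) :=
        (measure_mono hcover).trans (measure_biUnion_finset_le _ _)
    _ ≤ ∑ _c ∈ Finset.range (m + 1), (2⁻¹ : ℝ≥0∞) ^ m :=
        Finset.sum_le_sum fun c _ => measure_biUnion_isRecordTail_le hμ c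
    _ = (m + 1) * 2⁻¹ ^ m := by simp

def recoveryTest (cf : Code) : Set (ℕ × List Bool) :=
  {p | cf.IsRecoveryString (2 * p.1 + 1) p.2}

lemma measure_testSet_recoveryTest_le (hμ : IsCoinMeasure μ) (k : ℕ) :
    μ (testSet cf.recoveryTest k) ≤ 2⁻¹ ^ k :=
  (measure_biUnion_isRecoveryString_le hμ (2 * k + 1)).trans (succ_mul_inv_two_pow_le k)

end Nat.Partrec.Code

lemma primrecRel_enumerates (cf : Code) :
    PrimrecRel fun (x : ℕ) (p : ℕ × List Bool) => cf.Enumerates p.1 p.2 x := by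
  have hbits : PrimrecRel fun (z : ℕ) (q : ℕ × ℕ × ℕ × List Bool) =>
      q.2.2.1 ≤ z ∧ q.2.2.2.getD (z - q.2.2.1) false = true := by
    have hm : Primrec fun a : ℕ × ℕ × ℕ × ℕ × List Bool => a.2.2.2.1 :=
      Primrec.fst.comp (Primrec.snd.comp (Primrec.snd.comp Primrec.snd))
    have hτ : Primrec fun a : ℕ × ℕ × ℕ × ℕ × List Bool => a.2.2.2.2 :=
      Primrec.snd.comp (Primrec.snd.comp (Primrec.snd.comp Primrec.snd))
    exact (Primrec.nat_le.comp hm Primrec.fst).and (Primrec.eq.comp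
      ((Primrec.list_getD false).comp hτ (Primrec.nat_sub.comp Primrec.fst hm))
      (Primrec.const true))
  have hrun : PrimrecRel fun (y : ℕ) (p : ℕ × ℕ × List Bool) =>
      (Code.evaln p.2.2.length cf (Nat.pair p.1 y)).isSome = true :=
    Primrec.eq.comp (Primrec.option_isSome.comp (Code.primrec_evaln.comp (Primrec.pair
      (Primrec.pair (Primrec.list_length.comp (Primrec.snd.comp (Primrec.snd.comp Primrec.snd)))
        (Primrec.const cf))
      (Primrec₂.natPair.comp (Primrec.fst.comp Primrec.snd) Primrec.fst))))
      (Primrec.const true)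
  have hstep : PrimrecRel fun (y : ℕ) (p : ℕ × ℕ × List Bool) =>
      (Code.evaln p.2.2.length cf (Nat.pair p.1 y)).isSome = true ∧
        ∀ z ∈ dfinList y, p.2.1 ≤ z ∧ p.2.2.getD (z - p.2.1) false = true :=
    hrun.and (hbits.forall_mem_list.comp (primrec_dfinList.comp Primrec.fst) Primrec.id)
  refine (hstep.exists_mem_list.comp (Primrec.list_range.comp (Primrec.succ.comp
    (Primrec.list_length.comp (Primrec.snd.comp Primrec.snd)))) Primrec.id).of_eq ?_
  rintro ⟨x, m, τ⟩
  simp [Code.Enumerates]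

lemma primrec_enumCount (cf : Code) : Primrec₂ cf.enumCount := by
  refine (Primrec.list_length.comp ((primrecRel_enumerates cf).listFilter.comp
    (Primrec.list_range.comp Primrec.fst) Primrec.id)).of_eq ?_
  rintro ⟨m, τ⟩
  simp [Code.enumCount, List.countP_eq_length_filter]

lemma primrec_recoveredPrefix (cf : Code) : Primrec₂ cf.recoveredPrefix :=
  Primrec.list_map (Primrec.list_range.comp Primrec.fst)
    ((primrecRel_enumerates cf).decide.comp Primrec.snd Primrec.fst).to₂

lemma primrecRel_isRecordTail (cf : Code) : PrimrecRel cf.IsRecordTail := by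
  have hlt : PrimrecRel fun (t : ℕ) (p : ℕ × List Bool) =>
      cf.enumCount p.1 (p.2.take t) < cf.enumCount p.1 p.2 :=
    Primrec.nat_lt.comp ((primrec_enumCount cf).comp (Primrec.fst.comp Primrec.snd)
        (Primrec.list_take.comp Primrec.fst (Primrec.snd.comp Primrec.snd)))
      ((primrec_enumCount cf).comp (Primrec.fst.comp Primrec.snd) (Primrec.snd.comp Primrec.snd))
  refine (hlt.forall_mem_list.comp (Primrec.list_range.comp
    (Primrec.list_length.comp Primrec.snd)) Primrec.id).of_eq ?_
  rintro ⟨m, τ⟩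
  simp [Code.IsRecordTail]

lemma primrecRel_isRecoveryString (cf : Code) : PrimrecRel cf.IsRecoveryString :=
  have hdrop : Primrec fun p : ℕ × List Bool => p.2.drop p.1 :=
    Primrec.list_drop.comp Primrec.fst Primrec.snd
  (Primrec.eq.comp (Primrec.list_take.comp Primrec.fst Primrec.snd)
    ((primrec_recoveredPrefix cf).comp Primrec.fst hdrop)).and
    ((primrecRel_isRecordTail cf).comp Primrec.fst hdrop)

lemma ce_recoveryTest (cf : Code) : CE cf.recoveryTest :=
  ce_setOf_of_primrecPred ((primrecRel_isRecoveryString cf).comp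
    (Primrec.succ.comp (Primrec.nat_double.comp Primrec.fst)) Primrec.snd)

lemma exists_isRecoveryString_mem_cyl {cf : Code} {A : ℕ → Bool} (hinf : (toSet A).Infinite)
    (hW : ∀ Y ⊆ toSet A, Y.Infinite → enumOp (Code.eval cf).Dom Y = toSet A) (m : ℕ) :
    ∃ σ, cf.IsRecoveryString m σ ∧ A ∈ cyl σ := by
  set B : ℕ → Bool := fun i => A (m + i)
  have hY : {z | m ≤ z ∧ B (z - m) = true} = toSet A \ Set.Iio m := by
    ext z
    simp only [B, toSet, Set.mem_ofPred_eq, Set.mem_sdiff, Set.mem_Iio, not_lt]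
    constructor
    · rintro ⟨hmz, hz⟩; exact ⟨by rwa [Nat.add_sub_cancel' hmz] at hz, hmz⟩
    · rintro ⟨hz, hmz⟩; exact ⟨hmz, by rwa [Nat.add_sub_cancel' hmz]⟩
  have hA : ∀ x, (∃ n, cf.Enumerates m (res B n) x) ↔ A x = true := by
    intro x
    rw [Code.exists_enumerates_res_iff, hY, hW _ Set.sdiff_subset (hinf.sdiff (Set.finite_Iio m))]
    rfl
  have hmono : Monotone fun n x => cf.Enumerates m (res B n) x :=
    fun _ _ hab _ => Code.Enumerates.mono (res_prefix_res B hab)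
  obtain ⟨n, hexact, hrecord⟩ := hmono.exists_record_stage m
  have hsplit := res_add A m n
  refine ⟨res A (m + n), ⟨?_, ?_⟩, mem_cyl_res A _⟩
  · rw [hsplit, List.take_left' (res_length A m), List.drop_left' (res_length A m)]
    refine List.ext_getElem (by simp [res_length, Code.length_recoveredPrefix]) fun i hi _ => ?_
    rw [res_length] at hi
    simp only [getElem_res, Code.recoveredPrefix, List.getElem_map, List.getElem_range]
    exact Bool.eq_iff_iff.2 ((hA i).symm.trans ⟨fun h => by simpa using hexact i hi h,
      fun h => ⟨n, by simpa using h⟩⟩)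
  · rw [hsplit, List.drop_left' (res_length A m)]
    intro t ht
    rw [res_length] at ht
    rw [take_res B ht.le]
    exact hrecord t ht

/-- No 1-random set is uniformly introenumerable. -/
theorem stmt_18 (μ : Measure (ℕ → Bool)) (hμ : IsCoinMeasure μ)
    (A : ℕ → Bool) (h : MLRandom μ A) : ¬ UnifIntroenum (toSet A) := by
  rintro ⟨hinf, W, ⟨f, hf, rfl⟩, hW⟩
  obtain ⟨cf, rfl⟩ := Code.exists_code.1 (Partrec.nat_iff.1 hf)
  obtain ⟨k, hk⟩ := h cf.recoveryTest (ce_recoveryTest cf)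
    (Code.measure_testSet_recoveryTest_le hμ)
  obtain ⟨σ, hσ, hA⟩ := exists_isRecoveryString_mem_cyl hinf hW (2 * k + 1)
  exact hk (Set.mem_biUnion hσ hA)
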